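/- arXiv:1507.04218 — 2 statements merged into one kernel-verified Lean document; each statement's English description precedes it below -/
import Mathlib

section
/- Let p, q ∈ ℤ with p ≠ 0, q ≠ 0, and p² ≠ q². Then the 5-tuple (k₁, k₂, k₃, k₄, k₅) = (pq, −q², −pq, p², p² − q²) consists of nonzero integers and satisfies the quintic resonance relations k₁ − k₂ + k₃ − k₄ + k₅ = 0 and k₁² − k₂² + k₃² − k₄² + k₅² = 0; that is, it creates the zero mode by resonant interaction of nonzero modes. -/
/-- **Creation of the zero mode by quintic resonant interaction (Lemma 4.4).**
For `p, q ∈ ℤ` with `p ≠ 0`, `q ≠ 0` and `p² ≠ q²`, the 5-tuple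
`(k₁,k₂,k₃,k₄,k₅) = (pq, −q², −pq, p², p² − q²)` consists of nonzero integers and
satisfies the quintic resonance relations `k₁ − k₂ + k₃ − k₄ + k₅ = 0` and
`k₁² − k₂² + k₃² − k₄² + k₅² = 0`; that is, it creates the zero mode by resonant
interaction of nonzero modes. -/
theorem quintic_resonant_tuple (p q : ℤ) (hp : p ≠ 0) (hq : q ≠ 0)
    (hpq : p ^ 2 ≠ q ^ 2) :
    (p * q ≠ 0 ∧ -q ^ 2 ≠ 0 ∧ -(p * q) ≠ 0 ∧ p ^ 2 ≠ 0 ∧ p ^ 2 - q ^ 2 ≠ 0) ∧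
    (p * q) - (-q ^ 2) + (-(p * q)) - p ^ 2 + (p ^ 2 - q ^ 2) = 0 ∧
    (p * q) ^ 2 - (-q ^ 2) ^ 2 + (-(p * q)) ^ 2 - (p ^ 2) ^ 2
      + (p ^ 2 - q ^ 2) ^ 2 = 0 := by
  refine ⟨⟨mul_ne_zero hp hq, neg_ne_zero.2 (pow_ne_zero _ hq),
    neg_ne_zero.2 (mul_ne_zero hp hq), pow_ne_zero _ hp, sub_ne_zero.2 hpq⟩, by ring, by ring⟩
end

section
/- Let (α_j)_{j∈ℤ} ∈ ℓ¹(ℤ, ℂ) and define, for j ∈ ℤ and t ∈ ℝ, a_j(t) = α_j exp(−i(2 Σ_{k∈ℤ} |α_k|² − |α_j|²) t). Then (a_j)_{j∈ℤ} belongs to C^∞(ℝ; ℓ¹(ℤ, ℂ)), satisfies |a_j(t)| = |α_j| for all t and j, and solves the one-dimensional cubic resonant system i ȧ_j(t) = (2 Σ_{k∈ℤ} |a_k(t)|² − |a_j(t)|²) a_j(t) with a_j(0) = α_j, for all j ∈ ℤ and t ∈ ℝ. In particular, if α_j = 0 then a_j(t) = 0 for all t. -/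
open Filter
open scoped ENNReal NNReal

noncomputable def evCLM (j : ℤ) : lp (fun _ : ℤ => ℂ) 1 →L[ℂ] ℂ :=
  LinearMap.mkContinuous
    { toFun := fun f => f j
      map_add' := fun f g => by simp [lp.coeFn_add]
      map_smul' := fun m f => by simp [lp.coeFn_smul] }
    1 (fun f => by rw [one_mul]; exact lp.norm_apply_le_norm one_ne_zero f j)

lemma lp_one_hasSum_norm (f : lp (fun _ : ℤ => ℂ) 1) :
    HasSum (fun j => ‖f j‖) ‖f‖ := by
  simpa using lp.hasSum_norm (p := 1) (by simp) f

lemma lp_one_norm_eq (f : lp (fun _ : ℤ => ℂ) 1) : ‖f‖ = ∑' j, ‖f j‖ :=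
  (lp_one_hasSum_norm f).tsum_eq.symm

lemma memℓp_one_of_summable {f : ℤ → ℂ} (hf : Summable fun j => ‖f j‖) :
    Memℓp f 1 := memℓp_gen (by simpa using hf)

/-- The diagonal operator on `ℓ¹(ℤ, ℂ)` with bounded diagonal entries. -/
noncomputable def diagCLM (μ : ℤ → ℂ) (M : ℝ) (hM : ∀ j, ‖μ j‖ ≤ M) :
    lp (fun _ : ℤ => ℂ) 1 →L[ℂ] lp (fun _ : ℤ => ℂ) 1 := by
  have M0 : 0 ≤ M := le_trans (norm_nonneg _) (hM 0)
  have hmem : ∀ x : lp (fun _ : ℤ => ℂ) 1, Memℓp (fun j => μ j * x j) 1 := by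
    intro x
    apply memℓp_one_of_summable
    apply Summable.of_nonneg_of_le (fun j => norm_nonneg _)
      (fun j => ?_) ((lp_one_hasSum_norm x).summable.mul_left M)
    rw [norm_mul]
    exact mul_le_mul_of_nonneg_right (hM j) (norm_nonneg _)
  exact LinearMap.mkContinuous
    { toFun := fun x => ⟨fun j => μ j * x j, hmem x⟩
      map_add' := fun x y => by
        apply lp.ext
        funext j
        simp [lp.coeFn_add]
        exact mul_add _ _ _
      map_smul' := fun m x => by
        apply lp.ext
        funext j
        simp [lp.coeFn_smul]
        ring }
    M (by
      intro x
      show ‖(⟨fun j => μ j * x j, hmem x⟩ : lp (fun _ : ℤ => ℂ) 1)‖ ≤ M * ‖x‖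
      rw [lp_one_norm_eq]
      calc ∑' j, ‖μ j * x j‖ ≤ ∑' j, M * ‖x j‖ := by
            apply Summable.tsum_le_tsum _ _ ((lp_one_hasSum_norm x).summable.mul_left M)
            · intro j
              rw [norm_mul]
              exact mul_le_mul_of_nonneg_right (hM j) (norm_nonneg _)
            · apply Summable.of_nonneg_of_le (fun j => norm_nonneg _) (fun j => ?_)
                ((lp_one_hasSum_norm x).summable.mul_left M)
              rw [norm_mul]
              exact mul_le_mul_of_nonneg_right (hM j) (norm_nonneg _)
        _ = M * ‖x‖ := by rw [tsum_mul_left, lp_one_norm_eq])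

lemma diagCLM_apply (μ : ℤ → ℂ) (M : ℝ) (hM : ∀ j, ‖μ j‖ ≤ M)
    (x : lp (fun _ : ℤ => ℂ) 1) (j : ℤ) : (diagCLM μ M hM x) j = μ j * x j := rfl

noncomputable abbrev X1 := lp (fun _ : ℤ => ℂ) 1

lemma diag_pow_apply (μ : ℤ → ℂ) (M : ℝ) (hM : ∀ j, ‖μ j‖ ≤ M) (n : ℕ) (x : X1) (j : ℤ) :
    ((diagCLM μ M hM ^ n) x) j = (μ j) ^ n * x j := by
  induction n generalizing x with
  | zero => simp
  | succ n ih =>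
    rw [pow_succ, ContinuousLinearMap.mul_apply, ih]
    rw [diagCLM_apply]
    ring

lemma exp_diag_apply (μ : ℤ → ℂ) (M : ℝ) (hM : ∀ j, ‖μ j‖ ≤ M) (x : X1) (j : ℤ) :
    ((NormedSpace.exp (diagCLM μ M hM)) x) j = Complex.exp (μ j) * x j := by
  set A := diagCLM μ M hM with hA
  set Ψ : (X1 →L[ℂ] X1) →L[ℂ] ℂ :=
    (evCLM j).comp ((ContinuousLinearMap.apply ℂ X1) x) with hΨ
  have hΨ_apply : ∀ T : X1 →L[ℂ] X1, Ψ T = (T x) j := fun T => rfl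
  calc ((NormedSpace.exp A) x) j = Ψ (NormedSpace.exp A) := rfl
    _ = Ψ (∑' n : ℕ, ((Nat.factorial n : ℂ))⁻¹ • A ^ n) := by rw [NormedSpace.exp_eq_tsum ℂ]
    _ = ∑' n : ℕ, Ψ (((Nat.factorial n : ℂ))⁻¹ • A ^ n) :=
        Ψ.map_tsum (NormedSpace.expSeries_summable' A)
    _ = ∑' n : ℕ, ((Nat.factorial n : ℂ))⁻¹ • ((μ j) ^ n * x j) := by
        refine tsum_congr fun n => ?_
        rw [map_smul, hΨ_apply, hA, diag_pow_apply]
    _ = (∑' n : ℕ, ((Nat.factorial n : ℂ))⁻¹ • (μ j) ^ n) * x j := by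
        simp_rw [smul_eq_mul, ← mul_assoc]
        exact tsum_mul_right
    _ = Complex.exp (μ j) * x j := by
        rw [Complex.exp_eq_exp_ℂ, NormedSpace.exp_eq_tsum ℂ]

lemma analytic_exp_smul (μ : ℤ → ℂ) (M : ℝ) (hM : ∀ j, ‖μ j‖ ≤ M) (x : X1) :
    ContDiff ℝ (⊤ : ℕ∞) (fun t : ℝ => (NormedSpace.exp (t • diagCLM μ M hM)) x) := by
  set A := diagCLM μ M hM with hA
  set σ : ℝ →L[ℝ] (X1 →L[ℂ] X1) := (ContinuousLinearMap.id ℝ ℝ).smulRight A with hσ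
  set Λ : (X1 →L[ℂ] X1) →L[ℝ] X1 :=
    ((ContinuousLinearMap.apply ℂ X1) x).restrictScalars ℝ with hΛ
  have hF : (fun t : ℝ => (NormedSpace.exp (t • A)) x)
      = ⇑Λ ∘ (NormedSpace.exp) ∘ ⇑σ := rfl
  rw [hF]
  apply AnalyticOnNhd.contDiff
  intro t _
  have h1 : AnalyticAt ℝ (NormedSpace.exp : (X1 →L[ℂ] X1) → (X1 →L[ℂ] X1)) (σ t) := by
    refine (NormedSpace.analyticAt_exp_of_mem_ball (𝕂 := ℂ) (σ t) ?_).restrictScalars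
    rw [NormedSpace.expSeries_radius_eq_top]
    exact edist_lt_top _ _
  exact (Λ.analyticAt _).comp (h1.comp (σ.analyticAt t))

lemma norm_exp_aux (x t : ℝ) : ‖Complex.exp (-Complex.I * (x:ℂ) * (t:ℂ))‖ = 1 := by
  rw [Complex.norm_exp]
  have h : (-Complex.I * (x:ℂ) * (t:ℂ)).re = 0 := by simp
  rw [h, Real.exp_zero]

lemma hasDerivAt_cexp_real (c : ℂ) (t : ℝ) :
    HasDerivAt (fun s : ℝ => Complex.exp (c * s)) (c * Complex.exp (c * t)) t := by
  have h1 : HasDerivAt (fun z : ℂ => Complex.exp (c * z)) (c * Complex.exp (c * ↑t)) (t : ℂ) := by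
    have := (Complex.hasDerivAt_exp (c * ↑t)).comp (↑t : ℂ) ((hasDerivAt_id (↑t : ℂ)).const_mul c)
    refine this.congr_deriv ?_
    ring
  exact h1.comp_ofReal

/-- **Explicit solution of the 1D cubic resonant system (formula (4.2)).**
For `(α_j) ∈ ℓ¹(ℤ)` set `a_j(t) = α_j exp(−i(2Σ_k|α_k|² − |α_j|²)t)`. Then
`(a_j) ∈ C^∞(ℝ; ℓ¹(ℤ))`, `|a_j(t)| = |α_j|` for all `t, j`, and it solves
`i ȧ_j = (2Σ_k |a_k|² − |a_j|²) a_j`, `a_j(0) = α_j`. In particular `α_j = 0`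
implies `a_j ≡ 0`. -/
theorem explicit_solution_cubic_resonant_1D (α : ℤ → ℂ)
    (hα : Summable fun k => ‖α k‖) (a : ℝ → ℤ → ℂ)
    (hdef : ∀ (t : ℝ) (j : ℤ),
      a t j = α j * Complex.exp
        (-Complex.I * ((2 * (∑' k : ℤ, ‖α k‖ ^ 2) - ‖α j‖ ^ 2 : ℝ) : ℂ) * t)) :
    (∀ t : ℝ, Summable fun j => ‖a t j‖) ∧
    (∃ F : ℝ → lp (fun _ : ℤ => ℂ) 1,
      (∀ (t : ℝ) (j : ℤ), F t j = a t j) ∧ ContDiff ℝ (⊤ : ℕ∞) F) ∧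
    (∀ (t : ℝ) (j : ℤ), ‖a t j‖ = ‖α j‖) ∧
    (∀ j : ℤ, a 0 j = α j) ∧
    (∀ (j : ℤ) (t : ℝ),
      Complex.I * deriv (fun s => a s j) t
        = ((2 * (∑' k : ℤ, ‖a t k‖ ^ 2) - ‖a t j‖ ^ 2 : ℝ) : ℂ) * a t j) ∧
    (∀ j : ℤ, α j = 0 → ∀ t : ℝ, a t j = 0) := by
  set S : ℝ := ∑' k : ℤ, ‖α k‖ with hS
  set T : ℝ := ∑' k : ℤ, ‖α k‖ ^ 2 with hT
  set lam : ℤ → ℝ := fun j => 2 * T - ‖α j‖ ^ 2 with hlam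
  set c : ℤ → ℂ := fun j => -Complex.I * ((lam j : ℝ) : ℂ) with hc
  have ha : ∀ (t : ℝ) (j : ℤ), a t j = α j * Complex.exp (c j * t) := fun t j => hdef t j
  have hnorm : ∀ (t : ℝ) (j : ℤ), ‖a t j‖ = ‖α j‖ := by
    intro t j
    rw [ha, norm_mul, hc]
    simp only []
    rw [norm_exp_aux (lam j) t, mul_one]
  have hbS : ∀ j : ℤ, ‖α j‖ ≤ S := fun j => Summable.le_tsum hα j fun _ _ => norm_nonneg _
  have hS0 : (0:ℝ) ≤ S := tsum_nonneg fun _ => norm_nonneg _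
  have hT0 : (0:ℝ) ≤ T := tsum_nonneg fun _ => sq_nonneg _
  set M : ℝ := 2 * T + S ^ 2 with hM
  have hsq : ∀ j : ℤ, ‖α j‖ ^ 2 ≤ S ^ 2 := fun j => by
    nlinarith [hbS j, norm_nonneg (α j)]
  have hcM : ∀ j : ℤ, ‖c j‖ ≤ M := by
    intro j
    have h1 : ‖c j‖ = |lam j| := by
      rw [hc]; simp [Complex.norm_real]
    have h2 : lam j = 2 * T - ‖α j‖ ^ 2 := rfl
    rw [h1, abs_le, h2]
    constructor <;> nlinarith [hsq j, hT0, sq_nonneg (‖α j‖)]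
  -- part 1
  have part1 : ∀ t : ℝ, Summable fun j => ‖a t j‖ := by
    intro t; simp only [hnorm]; exact hα
  -- part 5 (deriv)
  have part5 : ∀ (j : ℤ) (t : ℝ),
      Complex.I * deriv (fun s => a s j) t
        = ((2 * (∑' k : ℤ, ‖a t k‖ ^ 2) - ‖a t j‖ ^ 2 : ℝ) : ℂ) * a t j := by
    intro j t
    have hD : HasDerivAt (fun s => a s j) (c j * a t j) t := by
      have h1 := (hasDerivAt_cexp_real (c j) t).const_mul (α j)
      have h2 : (fun s : ℝ => α j * Complex.exp (c j * s)) = fun s => a s j := by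
        funext s; rw [ha]
      rw [h2] at h1
      refine h1.congr_deriv ?_
      rw [ha]; ring
    rw [hD.deriv]
    have hsum : (∑' k : ℤ, ‖a t k‖ ^ 2) = T := by
      rw [hT]; exact tsum_congr fun k => by rw [hnorm]
    rw [hsum, hnorm]
    have h3 : ((2 * T - ‖α j‖ ^ 2 : ℝ) : ℂ) = Complex.I * c j := by
      rw [hc]
      have h4 : Complex.I * (-Complex.I * ((lam j : ℝ) : ℂ)) = ((lam j : ℝ) : ℂ) := by
        rw [show Complex.I * (-Complex.I * ((lam j : ℝ) : ℂ))
            = -(Complex.I * Complex.I) * ((lam j : ℝ) : ℂ) by ring, Complex.I_mul_I]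
        ring
      rw [h4, hlam]
    rw [h3]; ring
  -- part 2 : smooth lp-valued function
  have part2 : ∃ F : ℝ → lp (fun _ : ℤ => ℂ) 1,
      (∀ (t : ℝ) (j : ℤ), F t j = a t j) ∧ ContDiff ℝ (⊤ : ℕ∞) F := by
    set x₀ : X1 := ⟨α, memℓp_one_of_summable hα⟩ with hx₀
    have hx₀_apply : ∀ j : ℤ, (x₀ : ∀ _ : ℤ, ℂ) j = α j := fun j => rfl
    set A := diagCLM c M hcM with hA
    refine ⟨fun t => (NormedSpace.exp (t • A)) x₀, ?_, analytic_exp_smul c M hcM x₀⟩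
    intro t j
    have hscM : ∀ i : ℤ, ‖(t : ℂ) * c i‖ ≤ |t| * M := by
      intro i
      rw [norm_mul, Complex.norm_real, Real.norm_eq_abs]
      exact mul_le_mul_of_nonneg_left (hcM i) (abs_nonneg t)
    have hsc : t • A = diagCLM (fun i => (t : ℂ) * c i) (|t| * M) hscM := by
      refine ContinuousLinearMap.ext fun x => ?_
      apply lp.ext
      funext i
      rw [ContinuousLinearMap.smul_apply, lp.coeFn_smul, Pi.smul_apply, hA]
      simp only [diagCLM_apply]
      rw [Complex.real_smul]
      ring
    show ((NormedSpace.exp (t • A) x₀ : X1) : ∀ _ : ℤ, ℂ) j = a t j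
    rw [hsc, exp_diag_apply, hx₀_apply, ha]
    ring
  refine ⟨part1, part2, hnorm, ?_, part5, ?_⟩
  · intro j; rw [hdef]; simp
  · intro j hj t; rw [hdef, hj, zero_mul]
end
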